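/- arXiv:1404.4790 — 2 statements merged into one kernel-verified Lean document; each statement's English description precedes it below -/
import Mathlib

section
/- There exists δ₀ ∈ (0,1) such that for every δ ∈ (0, δ₀], the function F₁ : ℝ → ℝ defined by F₁(s) = −½ s² log s² for |s| ≤ δ (with F₁(0) = 0) and F₁(s) = −½ s²(log δ² + 3) + 2δ|s| − ½δ² for |s| > δ is convex on ℝ, nonnegative, and continuously differentiable. -/
open Real

noncomputable section

/-- The function `F₁` (recall `Real.log 0 = 0`, implementing `0 · log 0 = 0`). -/
def F1 (δ : ℝ) (s : ℝ) : ℝ :=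
  if |s| ≤ δ then -(1 / 2) * s ^ 2 * Real.log (s ^ 2)
  else -(1 / 2) * s ^ 2 * (Real.log (δ ^ 2) + 3) + 2 * δ * |s| - (1 / 2) * δ ^ 2

/-!
On `|s| ≤ δ`, `F₁ = -½ s² log s²`, whose derivative `-s (log s² + 1)` is continuous also at `0`
(because `s log s → 0`) and whose second derivative `-(log s² + 3)` is nonnegative as long as
`log δ² + 3 ≤ 0`. On `|s| > δ`, `F₁` is the second-order Taylor polynomial of the inner piece at
`±δ` (as a function of `|s|`), so the two pieces glue to a `C¹` function whose derivative is odd and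
nondecreasing; hence `F₁` is convex. Nonnegativity holds piecewise: `s² log s² ≤ 0` for `s² ≤ 1`,
and on the outer piece every term has the right sign.
-/

open Set Filter Topology

theorem mul_log_sq_eq (s : ℝ) : s * log (s ^ 2) = 2 * (s * log s) := by
  rw [log_pow]; push_cast; ring

theorem continuous_mul_log_sq : Continuous fun s : ℝ => s * log (s ^ 2) := by
  simpa only [mul_log_sq_eq] using continuous_mul_log.const_mul 2

theorem hasDerivAt_mul_log_sq {x : ℝ} (hx : x ≠ 0) :
    HasDerivAt (fun s : ℝ => s * log (s ^ 2)) (log (x ^ 2) + 2) x := by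
  rw [show (fun s : ℝ => s * log (s ^ 2)) = fun s => 2 * (s * log s) from funext mul_log_sq_eq]
  refine ((hasDerivAt_mul_log hx).const_mul 2).congr_deriv ?_
  rw [log_pow]
  push_cast
  ring

theorem hasDerivAt_sq_mul_log_sq (x : ℝ) :
    HasDerivAt (fun s : ℝ => s ^ 2 * log (s ^ 2)) (2 * x * (log (x ^ 2) + 1)) x := by
  refine hasDerivAt_of_hasDerivAt_of_ne' (x := 0) (g := fun y => 2 * y * (log (y ^ 2) + 1))
    (fun y hy => ?_) (continuous_pow 2).mul_log.continuousAt ?_ x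
  · refine ((hasDerivAt_mul_log (pow_ne_zero 2 hy)).comp (h := fun s : ℝ => s ^ 2) y
      (hasDerivAt_pow 2 y)).congr_deriv ?_
    push_cast
    ring
  · have : Continuous fun s : ℝ => 2 * (s * log (s ^ 2)) + 2 * s :=
      (continuous_mul_log_sq.const_mul 2).add (continuous_id.const_mul 2)
    convert this.continuousAt using 2 with s
    ring

section F1

variable {δ x : ℝ}

/-- On `|s| > δ` the clamp `max (-δ) (min δ s)` equals `δ * sign s`; written this way the outer
branch is continuous on all of `ℝ`. -/
def F1Deriv (δ s : ℝ) : ℝ :=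
  if |s| ≤ δ then -s * (log (s ^ 2) + 1)
  else -s * (log (δ ^ 2) + 3) + 2 * max (-δ) (min δ s)

theorem F1_neg (δ s : ℝ) : F1 δ (-s) = F1 δ s := by
  simp [F1]

theorem F1Deriv_neg (hδ : 0 ≤ δ) (s : ℝ) : F1Deriv δ (-s) = -F1Deriv δ s := by
  have hclamp : max (-δ) (min δ (-s)) = -max (-δ) (min δ s) := by
    rcases le_total s (-δ) with h | h <;> rcases le_total s δ with h' | h' <;>
      simp only [min_def, max_def] <;> split_ifs <;> linarith
  simp only [F1Deriv, abs_neg, neg_sq, hclamp]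
  split_ifs <;> ring

theorem F1_eqOn_Icc :
    EqOn (F1 δ) (fun s => -(1 / 2) * (s ^ 2 * log (s ^ 2))) (Icc (-δ) δ) := fun s hs => by
  rw [F1, if_pos (abs_le.2 hs), mul_assoc]

theorem F1_eqOn_Ici (hδ : 0 ≤ δ) :
    EqOn (F1 δ) (fun s => -(1 / 2) * s ^ 2 * (log (δ ^ 2) + 3) + 2 * δ * s - (1 / 2) * δ ^ 2)
      (Ici δ) := by
  intro s (hs : δ ≤ s)
  have habs : |s| = s := abs_of_nonneg (hδ.trans hs)
  by_cases h : |s| ≤ δ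
  · obtain rfl : s = δ := le_antisymm (habs ▸ h) hs
    simp only [F1, if_pos h]
    ring
  · rw [F1, if_neg h, habs]

theorem F1Deriv_of_le (hδ : 0 ≤ δ) (hx : δ ≤ x) :
    F1Deriv δ x = -x * (log (δ ^ 2) + 3) + 2 * δ := by
  have hclamp : max (-δ) (min δ x) = δ := by
    rw [min_eq_left hx, max_eq_right (by linarith)]
  by_cases h : |x| ≤ δ
  · obtain rfl : x = δ := le_antisymm (abs_of_nonneg (hδ.trans hx) ▸ h) hx
    simp only [F1Deriv, if_pos h]
    ring
  · simp only [F1Deriv, if_neg h, hclamp]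

theorem continuous_F1Deriv : Continuous (F1Deriv δ) := by
  refine Continuous.if_le ?_ (by fun_prop) continuous_abs continuous_const fun s hs => ?_
  · have : Continuous fun s : ℝ => -(s * log (s ^ 2)) - s :=
      continuous_mul_log_sq.neg.sub continuous_id
    convert this using 2 with s
    ring
  · obtain ⟨h₁, h₂⟩ := abs_le.1 hs.le
    rw [← sq_abs s, hs, min_eq_right h₂, max_eq_right h₁]
    ring

theorem hasDerivWithinAt_F1_Icc (hx : x ∈ Icc (-δ) δ) :
    HasDerivWithinAt (F1 δ) (F1Deriv δ x) (Icc (-δ) δ) x := by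
  have hinner := (hasDerivAt_sq_mul_log_sq x).const_mul (-(1 / 2))
  refine (hinner.hasDerivWithinAt.congr F1_eqOn_Icc (F1_eqOn_Icc hx)).congr_deriv ?_
  rw [F1Deriv, if_pos (abs_le.2 hx)]
  ring

theorem hasDerivWithinAt_F1_Ici (hδ : 0 ≤ δ) (hx : x ∈ Ici δ) :
    HasDerivWithinAt (F1 δ) (F1Deriv δ x) (Ici δ) x := by
  have houter := ((((hasDerivAt_pow 2 x).const_mul (-(1 / 2))).mul_const (log (δ ^ 2) + 3)).add
    ((hasDerivAt_id' x).const_mul (2 * δ))).sub_const ((1 / 2) * δ ^ 2)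
  refine (houter.hasDerivWithinAt.congr (F1_eqOn_Ici hδ) (F1_eqOn_Ici hδ hx)).congr_deriv ?_
  rw [F1Deriv_of_le hδ hx]
  push_cast
  ring

theorem hasDerivAt_F1 (hδ : 0 < δ) (x : ℝ) : HasDerivAt (F1 δ) (F1Deriv δ x) x := by
  wlog hx : 0 ≤ x generalizing x
  · have := (this (-x) (by linarith)).comp x (hasDerivAt_neg x)
    simpa [Function.comp_def, F1_neg, F1Deriv_neg hδ.le] using this
  rcases lt_trichotomy x δ with h | rfl | h
  · exact (hasDerivWithinAt_F1_Icc ⟨by linarith, h.le⟩).hasDerivAt (Icc_mem_nhds (by linarith) h)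
  · have hleft := (hasDerivWithinAt_F1_Icc ⟨by linarith, le_rfl⟩).mono_of_mem_nhdsWithin
      (Icc_mem_nhdsLE (neg_lt_self hδ))
    simpa only [Iic_union_Ici, hasDerivWithinAt_univ] using
      hleft.union (hasDerivWithinAt_F1_Ici hδ.le self_mem_Ici)
  · exact (hasDerivWithinAt_F1_Ici hδ.le h.le).hasDerivAt (Ici_mem_nhds h)

theorem deriv_F1 (hδ : 0 < δ) : deriv (F1 δ) = F1Deriv δ :=
  funext fun x => (hasDerivAt_F1 hδ x).deriv

theorem monotoneOn_F1Deriv_Icc (hL : log (δ ^ 2) + 3 ≤ 0) : MonotoneOn (F1Deriv δ) (Icc 0 δ) := by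
  have hderiv : ∀ x ∈ Ioo 0 δ, HasDerivAt (F1Deriv δ) (-(log (x ^ 2) + 3)) x := by
    intro x ⟨hx₀, hxδ⟩
    have hinner := ((hasDerivAt_mul_log_sq hx₀.ne').neg).sub (hasDerivAt_id' x)
    have hEq : F1Deriv δ =ᶠ[𝓝 x] fun s => -(s * log (s ^ 2)) - s := by
      filter_upwards [Icc_mem_nhds (by linarith : -δ < x) hxδ] with s hs
      rw [F1Deriv, if_pos (abs_le.2 hs)]
      ring
    exact (hinner.congr_of_eventuallyEq hEq).congr_deriv (by ring)
  refine monotoneOn_of_deriv_nonneg (convex_Icc 0 δ) continuous_F1Deriv.continuousOn ?_ ?_ <;>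
    rw [interior_Icc]
  · exact fun x hx => (hderiv x hx).differentiableAt.differentiableWithinAt
  · intro x hx
    have hlog : log (x ^ 2) ≤ log (δ ^ 2) :=
      log_le_log (pow_pos hx.1 2) (pow_le_pow_left₀ hx.1.le hx.2.le 2)
    rw [(hderiv x hx).deriv]
    linarith

theorem monotoneOn_F1Deriv_Ici (hδ : 0 ≤ δ) (hL : log (δ ^ 2) + 3 ≤ 0) :
    MonotoneOn (F1Deriv δ) (Ici δ) := by
  intro a ha b hb hab
  rw [F1Deriv_of_le hδ ha, F1Deriv_of_le hδ hb]
  nlinarith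

theorem monotone_F1Deriv (hδ : 0 ≤ δ) (hL : log (δ ^ 2) + 3 ≤ 0) : Monotone (F1Deriv δ) := by
  refine monotone_of_odd_of_monotoneOn_nonneg (F1Deriv_neg hδ) ?_
  rw [← Icc_union_Ici_eq_Ici hδ]
  exact (monotoneOn_F1Deriv_Icc hL).union_right (monotoneOn_F1Deriv_Ici hδ hL)
    (isGreatest_Icc hδ) isLeast_Ici

theorem convexOn_F1 (hδ : 0 < δ) (hL : log (δ ^ 2) + 3 ≤ 0) : ConvexOn ℝ univ (F1 δ) :=
  Monotone.convexOn_univ_of_deriv (fun x => (hasDerivAt_F1 hδ x).differentiableAt)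
    (deriv_F1 hδ ▸ monotone_F1Deriv hδ.le hL)

theorem contDiff_F1 (hδ : 0 < δ) : ContDiff ℝ 1 (F1 δ) :=
  contDiff_one_iff_deriv.2
    ⟨fun x => (hasDerivAt_F1 hδ x).differentiableAt, deriv_F1 hδ ▸ continuous_F1Deriv⟩

theorem F1_nonneg (hδ : 0 < δ) (hL : log (δ ^ 2) + 3 ≤ 0) (s : ℝ) : 0 ≤ F1 δ s := by
  have hδ₁ : δ ^ 2 ≤ 1 := (log_nonpos_iff (sq_nonneg δ)).1 (by linarith)
  unfold F1
  split_ifs with h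
  · have hs₁ : s ^ 2 ≤ 1 := (sq_le_sq' (abs_le.1 h).1 (abs_le.1 h).2).trans hδ₁
    nlinarith [mul_log_nonpos (sq_nonneg s) hs₁]
  · have hδs : δ ≤ |s| := (not_le.1 h).le
    nlinarith [mul_le_mul_of_nonneg_left hδs hδ.le, sq_nonneg s]

end F1

/-- For all sufficiently small `δ > 0`, `F₁` is convex, nonnegative and `C¹`. -/
theorem F1_convex_nonneg_contDiff :
    ∃ δ₀ : ℝ, δ₀ ∈ Set.Ioo (0 : ℝ) 1 ∧ ∀ δ ∈ Set.Ioc (0 : ℝ) δ₀,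
      ConvexOn ℝ Set.univ (F1 δ) ∧ (∀ s, 0 ≤ F1 δ s) ∧ ContDiff ℝ 1 (F1 δ) := by
  refine ⟨exp (-(3 / 2)), ⟨exp_pos _, exp_lt_one_iff.2 (by norm_num)⟩, fun δ ⟨hδ₀, hδ⟩ => ?_⟩
  have hL : log (δ ^ 2) + 3 ≤ 0 := by
    have := log_le_log hδ₀ hδ
    rw [log_exp] at this
    rw [log_pow]
    push_cast
    linarith
  exact ⟨convexOn_F1 hδ₀ hL, F1_nonneg hδ₀ hL, contDiff_F1 hδ₀⟩
end
end

section
/- For every δ > 0, with F₁ and F₂ defined as below, one has F₂(s) − F₁(s) = ½ s² log s² for all s ∈ ℝ, and F₂ is continuously differentiable on ℝ. -/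
/-!
The identity is `log (s² / δ²) = log s² - log δ²` on the outer branch. For the regularity, `F₂` is
even, vanishes on `[-δ, δ]` and for `s ≥ δ` agrees with the smooth function `F2Outer δ`, whose
value and derivative `s log (s² / δ²) - 2 (s - δ)` both vanish at `s = δ`. Hence `F₂` is
differentiable everywhere with the continuous derivative `s log (max (s², δ²) / δ²) - 2 (s - c(s))`,
`c` being the clamp onto `[-δ, δ]`.
-/

open Real

noncomputable section

/-- The function `F₂`. -/
def F2 (δ : ℝ) (s : ℝ) : ℝ :=
  if |s| ≤ δ then 0
  else (1 / 2) * s ^ 2 * Real.log (s ^ 2 / δ ^ 2) + 2 * δ * |s| - (3 / 2) * s ^ 2 -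
    (1 / 2) * δ ^ 2

open Set

section

variable {δ : ℝ}

lemma F2_sub_F1 (hδ : 0 < δ) (s : ℝ) :
    F2 δ s - F1 δ s = (1 / 2) * s ^ 2 * log (s ^ 2) := by
  by_cases hs : |s| ≤ δ
  · simp only [F1, F2, if_pos hs]
    ring
  · have hs0 : s ≠ 0 := by
      rintro rfl
      exact hs (by simpa using hδ.le)
    simp only [F1, F2, if_neg hs]
    rw [log_div (pow_ne_zero 2 hs0) (pow_ne_zero 2 hδ.ne')]
    ring

lemma F2_neg (s : ℝ) : F2 δ (-s) = F2 δ s := by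
  simp only [F2, abs_neg, neg_sq]

lemma F2_eq_zero_of_mem_Icc {s : ℝ} (hs : s ∈ Icc (-δ) δ) : F2 δ s = 0 :=
  if_pos (abs_le.2 hs)

def F2Outer (δ t : ℝ) : ℝ :=
  (1 / 2) * t ^ 2 * log (t ^ 2 / δ ^ 2) + 2 * δ * t - (3 / 2) * t ^ 2 - (1 / 2) * δ ^ 2

lemma F2_eq_F2Outer (hδ : 0 < δ) {t : ℝ} (ht : δ ≤ t) : F2 δ t = F2Outer δ t := by
  rcases ht.eq_or_lt with rfl | ht
  · rw [F2_eq_zero_of_mem_Icc ⟨by linarith, le_rfl⟩, F2Outer, div_self (by positivity),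
      log_one]
    ring
  · have hnot : ¬ |t| ≤ δ := by rw [abs_of_pos (hδ.trans ht)]; exact ht.not_ge
    rw [F2, if_neg hnot, abs_of_pos (hδ.trans ht), F2Outer]

lemma hasDerivAt_F2Outer (hδ : δ ≠ 0) {t : ℝ} (ht : t ≠ 0) :
    HasDerivAt (F2Outer δ) (t * log (t ^ 2 / δ ^ 2) - 2 * (t - δ)) t := by
  have hsq : HasDerivAt (fun t : ℝ => t ^ 2) (2 * t) t := by simpa using hasDerivAt_pow 2 t
  have hlog :
      HasDerivAt (fun t : ℝ => log (t ^ 2 / δ ^ 2)) (2 * t / δ ^ 2 / (t ^ 2 / δ ^ 2)) t :=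
    (hsq.div_const _).log (by positivity)
  refine (((((hsq.const_mul (1 / 2)).mul hlog).add ((hasDerivAt_id t).const_mul (2 * δ))).sub
    (hsq.const_mul (3 / 2))).sub_const ((1 / 2) * δ ^ 2)).congr_deriv ?_
  field_simp
  ring

def F2Deriv (δ s : ℝ) : ℝ :=
  s * log (max (s ^ 2) (δ ^ 2) / δ ^ 2) - 2 * (s - max (min s δ) (-δ))

lemma F2Deriv_of_mem_Icc (hδ : δ ≠ 0) {s : ℝ} (hs : s ∈ Icc (-δ) δ) :
    F2Deriv δ s = 0 := by
  have hsq : s ^ 2 ≤ δ ^ 2 := sq_le_sq' hs.1 hs.2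
  rw [F2Deriv, max_eq_right hsq, div_self (pow_ne_zero 2 hδ), log_one, min_eq_left hs.2,
    max_eq_left hs.1]
  ring

lemma F2Deriv_of_le (hδ : 0 ≤ δ) {t : ℝ} (ht : δ ≤ t) :
    F2Deriv δ t = t * log (t ^ 2 / δ ^ 2) - 2 * (t - δ) := by
  rw [F2Deriv, max_eq_left (pow_le_pow_left₀ hδ ht 2), min_eq_right ht,
    max_eq_left (by linarith)]

lemma F2Deriv_neg (hδ : 0 ≤ δ) (s : ℝ) : F2Deriv δ (-s) = -F2Deriv δ s := by
  have hclamp : max (min (-s) δ) (-δ) = -max (min s δ) (-δ) := by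
    simp only [max_def, min_def]
    split_ifs <;> linarith
  rw [F2Deriv, F2Deriv, neg_sq, hclamp]
  ring

lemma continuous_F2Deriv (hδ : δ ≠ 0) : Continuous (F2Deriv δ) := by
  have hpos (s : ℝ) : max (s ^ 2) (δ ^ 2) / δ ^ 2 ≠ 0 :=
    (div_pos (lt_max_of_lt_right (by positivity)) (by positivity)).ne'
  unfold F2Deriv
  exact (continuous_id.mul ((((continuous_pow 2).max continuous_const).div_const _).log hpos)).sub
    (continuous_const.mul (continuous_id.sub
      ((continuous_id.min continuous_const).max continuous_const)))

lemma hasDerivWithinAt_F2_Icc (hδ : δ ≠ 0) {s : ℝ} (hs : s ∈ Icc (-δ) δ) :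
    HasDerivWithinAt (F2 δ) (F2Deriv δ s) (Icc (-δ) δ) s := by
  rw [F2Deriv_of_mem_Icc hδ hs]
  exact (hasDerivWithinAt_const s _ 0).congr (fun _ ↦ F2_eq_zero_of_mem_Icc)
    (F2_eq_zero_of_mem_Icc hs)

lemma hasDerivWithinAt_F2_Ici (hδ : 0 < δ) {t : ℝ} (ht : δ ≤ t) :
    HasDerivWithinAt (F2 δ) (F2Deriv δ t) (Ici δ) t := by
  rw [F2Deriv_of_le hδ.le ht]
  exact (hasDerivAt_F2Outer hδ.ne' (hδ.trans_le ht).ne').hasDerivWithinAt.congr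
    (fun _ ↦ F2_eq_F2Outer hδ) (F2_eq_F2Outer hδ ht)

lemma hasDerivAt_F2_of_le (hδ : 0 < δ) {t : ℝ} (ht : δ ≤ t) :
    HasDerivAt (F2 δ) (F2Deriv δ t) t := by
  rcases ht.eq_or_lt with rfl | ht
  · have hleft : HasDerivWithinAt (F2 δ) (F2Deriv δ δ) (Iic δ) δ :=
      (hasDerivWithinAt_F2_Icc hδ.ne' ⟨by linarith, le_rfl⟩).mono_of_mem_nhdsWithin
        (Icc_mem_nhdsLE (by linarith))
    have hboth := hleft.union (hasDerivWithinAt_F2_Ici hδ le_rfl)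
    rwa [Iic_union_Ici, hasDerivWithinAt_univ] at hboth
  · exact (hasDerivWithinAt_F2_Ici hδ ht.le).hasDerivAt (Ici_mem_nhds ht)

lemma hasDerivAt_F2 (hδ : 0 < δ) (s : ℝ) : HasDerivAt (F2 δ) (F2Deriv δ s) s := by
  rcases le_or_gt δ s with hs | hs
  · exact hasDerivAt_F2_of_le hδ hs
  rcases le_or_gt s (-δ) with hs' | hs'
  · have hneg := (hasDerivAt_F2_of_le hδ (le_neg_of_le_neg hs')).comp s (hasDerivAt_neg s)
    simpa [Function.comp_def, F2_neg, F2Deriv_neg hδ.le] using hneg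
  · exact (hasDerivWithinAt_F2_Icc hδ.ne' ⟨hs'.le, hs.le⟩).hasDerivAt (Icc_mem_nhds hs' hs)

end

/-- `F₂ − F₁ = ½ s² log s²` and `F₂` is `C¹`. -/
theorem F2_sub_F1_and_contDiff (δ : ℝ) (hδ : 0 < δ) :
    (∀ s : ℝ, F2 δ s - F1 δ s = (1 / 2) * s ^ 2 * Real.log (s ^ 2)) ∧
      ContDiff ℝ 1 (F2 δ) := by
  have hderiv : deriv (F2 δ) = F2Deriv δ := funext fun s ↦ (hasDerivAt_F2 hδ s).deriv
  refine ⟨F2_sub_F1 hδ, contDiff_one_iff_deriv.2 ⟨fun s ↦ (hasDerivAt_F2 hδ s).differentiableAt,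
    hderiv ▸ continuous_F2Deriv hδ.ne'⟩⟩
end
end
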